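/- arXiv:2408.09160 — 3 statements merged into one kernel-verified Lean document; each statement's English description precedes it below -/
import Mathlib

section
/- There exists, for every n > 1, a Stable Marriage instance with n men and n women and a stable matching M in it such that any sequence of fewer than n−1 adjacent-transposition swaps applied to the preference lists leaves M stable. Concretely, in the instance where man u_i has preferences w_i ≻ w_{i+1} ≻ … ≻ w_n ≻ w_1 ≻ … ≻ w_{i−1} and woman w_i has preferences u_i ≻ u_{i+1} ≻ … ≻ u_n ≻ u_1 ≻ … ≻ u_{i−1}, the matching {{u_i, w_i} : i ∈ [n]} cannot be made unstable by fewer than n−1 swaps. -/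
/-!
Man `u` ranks `w` at position `w - u` and woman `w` ranks `u` at position `u - w` (mod `n`),
and for `u ≠ w` these two positions add up to `n`. A list whose top entry `a` is overtaken by
an entry at position `k` is at Kendall distance at least `k` from the original. So making
`{u, w}` block the diagonal matching costs at least `n` swaps.
-/

open Finset

/-- A Stable Marriage profile with `n` men and `n` women: each man's (resp. woman's)
preference list is given by a rank permutation assigning each woman (resp. man)
her position (smaller = more preferred). -/
abbrev SMProfile (n : ℕ) := (Fin n → Equiv.Perm (Fin n)) × (Fin n → Equiv.Perm (Fin n))

/-- Kendall tau (inversion / swap) distance between two preference rankings. -/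
def kendall {n : ℕ} (p q : Equiv.Perm (Fin n)) : ℕ :=
  ((Finset.univ ×ˢ Finset.univ : Finset (Fin n × Fin n)).filter
    (fun x => p x.1 < p x.2 ∧ q x.2 < q x.1)).card

/-- Swap distance between two profiles: sum of the Kendall tau distances of all lists. -/
def profileDist {n : ℕ} (P Q : SMProfile n) : ℕ :=
  (∑ u, kendall (P.1 u) (Q.1 u)) + ∑ w, kendall (P.2 w) (Q.2 w)

/-- Pair `{u,w}` blocks the (perfect) matching `M` in profile `P`. -/
def Blocks {n : ℕ} (P : SMProfile n) (M : Equiv.Perm (Fin n)) (u w : Fin n) : Prop :=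
  M u ≠ w ∧ P.1 u w < P.1 u (M u) ∧ P.2 w u < P.2 w (M.symm w)

/-- The matching `M` is stable in profile `P`. -/
def IsStable {n : ℕ} (P : SMProfile n) (M : Equiv.Perm (Fin n)) : Prop :=
  ∀ u w, ¬ Blocks P M u w

/-- The "Robust" instance: man `u_i` has preferences `w_i ≻ w_{i+1} ≻ … ≻ w_{i-1}`
(cyclically), and symmetrically for women: the rank of `w` in `u_i`'s list is `w - i`. -/
def robustProfile (n : ℕ) [NeZero n] : SMProfile n :=
  (fun i => Equiv.subRight i, fun i => Equiv.subRight i)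

/-- If `q` puts `b` before `a`, then every `x` with `p a ≤ p x < p b` witnesses an inversion:
`(x, b)` when `q` puts `b` before `x`, and `(a, x)` otherwise. -/
lemma sub_le_kendall_of_inverted {n : ℕ} (p q : Equiv.Perm (Fin n)) {a b : Fin n}
    (hq : q b < q a) : (p b : ℕ) - p a ≤ kendall p q := by
  set between := (Ico (p a) (p b)).map p.symm.toEmbedding
  have mem_between : ∀ x, x ∈ between ↔ p a ≤ p x ∧ p x < p b := by
    intro x
    simp [between, mem_map_equiv]
  calc (p b : ℕ) - p a = #between := by simp [between]
    _ ≤ kendall p q := by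
      unfold kendall
      refine card_le_card_of_injOn (fun x => if q b < q x then (x, b) else (a, x)) ?_ ?_
      · intro x hx
        obtain ⟨hax, hxb⟩ := (mem_between x).1 hx
        by_cases hbx : q b < q x
        · simpa [hbx] using hxb
        · have hxa : x ≠ a := by rintro rfl; exact hbx hq
          have hpa : p a < p x := lt_of_le_of_ne hax (p.injective.ne hxa.symm)
          simpa [hbx] using And.intro hpa (lt_of_le_of_lt (not_lt.1 hbx) hq)
      · intro x _ y _ hxy
        by_cases hbx : q b < q x <;> by_cases hby : q b < q y <;>
          simp_all [Prod.ext_iff]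

lemma Fin.val_sub_add_val_sub_of_ne {n : ℕ} {u w : Fin n} (h : u ≠ w) :
    ((w - u : Fin n) : ℕ) + (u - w : Fin n) = n := by
  rcases lt_or_gt_of_ne h with huw | hwu
  · rw [Fin.coe_sub_iff_le.2 huw.le, Fin.coe_sub_iff_lt.2 huw]
    have := Fin.lt_def.1 huw
    omega
  · rw [Fin.coe_sub_iff_lt.2 hwu, Fin.coe_sub_iff_le.2 hwu.le]
    have := Fin.lt_def.1 hwu
    omega

lemma kendall_add_kendall_le_profileDist {n : ℕ} (P Q : SMProfile n) (u w : Fin n) :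
    kendall (P.1 u) (Q.1 u) + kendall (P.2 w) (Q.2 w) ≤ profileDist P Q :=
  add_le_add (single_le_sum (f := fun u => kendall (P.1 u) (Q.1 u)) (by simp) (mem_univ u))
    (single_le_sum (f := fun w => kendall (P.2 w) (Q.2 w)) (by simp) (mem_univ w))

theorem stmt1_general (n : ℕ) [NeZero n] :
    IsStable (robustProfile n) (Equiv.refl (Fin n)) ∧
    ∀ Q : SMProfile n, profileDist (robustProfile n) Q < n - 1 →
      IsStable Q (Equiv.refl (Fin n)) := by
  constructor
  · rintro u w ⟨-, hman, -⟩
    simp [robustProfile] at hman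
  · rintro Q hdist u w ⟨hne, hman, hwoman⟩
    simp only [Equiv.refl_apply, Equiv.refl_symm] at hne hman hwoman
    have hu := sub_le_kendall_of_inverted ((robustProfile n).1 u) (Q.1 u) hman
    have hw := sub_le_kendall_of_inverted ((robustProfile n).2 w) (Q.2 w) hwoman
    have hdist' := kendall_add_kendall_le_profileDist (robustProfile n) Q u w
    simp only [robustProfile, Equiv.subRight_apply, sub_self, Fin.val_zero, Nat.sub_zero]
      at hu hw hdist' hdist
    have := Fin.val_sub_add_val_sub_of_ne hne
    omega

/-- in the Robust instance, the identity matching `{{u_i, w_i}}` is stable,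
and it remains stable in every profile at swap distance less than n − 1. -/
theorem stmt1 (n : ℕ) [NeZero n] (hn : 1 < n) :
    IsStable (robustProfile n) (Equiv.refl (Fin n)) ∧
    ∀ Q : SMProfile n, profileDist (robustProfile n) Q < n - 1 →
      IsStable Q (Equiv.refl (Fin n)) :=
  stmt1_general n
end

section
/- Let I be a Stable Marriage instance with complete preference lists and M a stable matching in I. Then the minimum number of adjacent swaps needed to make M unstable equals min over pairs {u,w} ∈ (U × W) \ M of c_u(w, M(u)) + c_w(u, M(w)), where c_a(b, b') denotes the number of adjacent swaps needed to bring b in front of b' in the preference list of agent a, which equals rk_a(b) − rk_a(b') when b is ranked below b', and 0 otherwise. -/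
open Finset

lemma kendall_self {n : ℕ} (p : Equiv.Perm (Fin n)) : kendall p p = 0 := by
  unfold kendall
  rw [Finset.card_eq_zero, Finset.filter_eq_empty_iff]
  rintro x - ⟨h1, h2⟩
  exact absurd h2 (lt_asymm h1)

lemma kendall_triangle {n : ℕ} (p q r : Equiv.Perm (Fin n)) :
    kendall p r ≤ kendall p q + kendall q r := by
  unfold kendall
  refine le_trans (Finset.card_le_card ?_) (Finset.card_union_le _ _)
  intro x hx
  simp only [Finset.mem_filter, Finset.mem_union] at *
  obtain ⟨hmem, h1, h2⟩ := hx
  rcases lt_trichotomy (q x.1) (q x.2) with h | h | h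
  · exact Or.inr ⟨hmem, h, h2⟩
  · have := q.injective h
    rw [this] at h1
    exact absurd h1 (lt_irrefl _)
  · exact Or.inl ⟨hmem, h1, h⟩

lemma kendall_lower {n : ℕ} (p q : Equiv.Perm (Fin n)) (b b' : Fin n) (h : q b < q b') :
    (p b : ℕ) - (p b' : ℕ) ≤ kendall p q := by
  rcases le_or_gt (p b : ℕ) (p b' : ℕ) with hle | hlt
  · simp [Nat.sub_eq_zero_of_le hle]
  · set S : Finset (Fin n) :=
      Finset.univ.filter (fun x => (p b' : ℕ) ≤ (p x : ℕ) ∧ (p x : ℕ) < (p b : ℕ)) with hS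
    have hcard : S.card = (p b : ℕ) - (p b' : ℕ) := by
      rw [← Nat.card_Ico]
      refine Finset.card_bij (fun x _ => (p x : ℕ)) ?_ ?_ ?_
      · intro x hx
        simp only [hS, Finset.mem_filter] at hx
        exact Finset.mem_Ico.2 ⟨hx.2.1, hx.2.2⟩
      · intro x hx y hy hxy
        exact p.injective (Fin.val_injective hxy)
      · intro t ht
        rw [Finset.mem_Ico] at ht
        have htn : t < n := lt_trans ht.2 (p b).isLt
        refine ⟨p.symm ⟨t, htn⟩, ?_, by simp⟩
        simp only [hS, Finset.mem_filter, Equiv.apply_symm_apply]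
        exact ⟨Finset.mem_univ _, ht.1, ht.2⟩
    rw [← hcard]
    unfold kendall
    refine Finset.card_le_card_of_injOn
      (fun x => if q b < q x then (x, b) else (b', x)) ?_ ?_
    · intro x hx
      show (if q b < q x then (x, b) else (b', x)) ∈ Finset.filter _ _
      replace hx := Finset.mem_filter.1 hx
      simp only [hS, Finset.mem_filter, Finset.mem_univ, true_and] at hx
      have hpx : p x < p b := Fin.lt_def.2 hx.2
      have hxb : x ≠ b := by rintro rfl; exact lt_irrefl _ hpx
      by_cases hq : q b < q x
      · simp only [hq, if_true, Finset.mem_filter, Finset.mem_product, Finset.mem_univ,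
          true_and]
        exact ⟨hpx, trivial⟩
      · push_neg at hq
        have hqx : q x < q b := lt_of_le_of_ne hq (fun he => hxb (q.injective he))
        have hqxb' : q x < q b' := lt_trans hqx h
        have hxb' : x ≠ b' := fun he => absurd (he ▸ hqxb') (lt_irrefl _)
        have hpb'x : p b' < p x := by
          refine Fin.lt_def.2 (lt_of_le_of_ne hx.1 ?_)
          intro he
          exact hxb' (p.injective (Fin.val_injective he)).symm
        simp only [hqx.not_gt, if_false, Finset.mem_filter, Finset.mem_product,
          Finset.mem_univ, true_and]
        exact ⟨hpb'x, hqxb'⟩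
    · intro x hx y hy hxy
      simp only [hS, Finset.coe_filter, Set.mem_setOf_eq] at hx hy
      by_cases hqx : q b < q x <;> by_cases hqy : q b < q y <;>
        simp only [hqx, hqy, if_true, if_false, Prod.mk.injEq] at hxy
      · exact hxy.1
      · exfalso
        have := hxy.2
        rw [← this] at hy
        omega
      · exfalso
        have := hxy.2.symm
        rw [this] at hx
        omega
      · exact hxy.2

lemma kendall_swap_le_one {n : ℕ} (p : Equiv.Perm (Fin n)) (b b'' : Fin n)
    (hj : (p b'' : ℕ) + 1 = (p b : ℕ)) :
    kendall p (p * Equiv.swap b b'') ≤ 1 := by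
  have hne : b ≠ b'' := by intro he; rw [he] at hj; omega
  unfold kendall
  have hsub : ((Finset.univ ×ˢ Finset.univ : Finset (Fin n × Fin n)).filter
      (fun x => p x.1 < p x.2 ∧ (p * Equiv.swap b b'') x.2 < (p * Equiv.swap b b'') x.1))
      ⊆ {(b'', b)} := by
    intro x hx
    replace hx := Finset.mem_filter.1 hx
    simp only [Finset.mem_filter, Equiv.Perm.mul_apply] at hx
    obtain ⟨-, h1, h2⟩ := hx
    rw [Finset.mem_singleton]
    rcases eq_or_ne x.1 b with hxb | hxb <;> rcases eq_or_ne x.1 b'' with hxb'' | hxb''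
    · exact absurd (hxb ▸ hxb'') hne
    · exfalso
      rw [hxb, Equiv.swap_apply_left] at h2
      rcases eq_or_ne x.2 b with hyb | hyb
      · rw [hyb, hxb] at h1; exact lt_irrefl _ h1
      · rcases eq_or_ne x.2 b'' with hyb'' | hyb''
        · rw [hxb, hyb''] at h1
          rw [Fin.lt_def] at h1; omega
        · rw [Equiv.swap_apply_of_ne_of_ne hyb hyb''] at h2
          rw [hxb] at h1
          rw [Fin.lt_def] at h1 h2; omega
    · rw [hxb'', Equiv.swap_apply_right] at h2
      rcases eq_or_ne x.2 b with hyb | hyb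
      · rw [Prod.ext_iff]; exact ⟨hxb'', hyb⟩
      · exfalso
        rcases eq_or_ne x.2 b'' with hyb'' | hyb''
        · rw [hxb'', hyb''] at h1; exact lt_irrefl _ h1
        · rw [Equiv.swap_apply_of_ne_of_ne hyb hyb''] at h2
          rw [hxb''] at h1
          rw [Fin.lt_def] at h1 h2
          have : p x.2 ≠ p b := fun he => hyb (p.injective he)
          rw [Ne, Fin.ext_iff] at this
          omega
    · exfalso
      rw [Equiv.swap_apply_of_ne_of_ne hxb hxb''] at h2
      rcases eq_or_ne x.2 b with hyb | hyb
      · rw [hyb, Equiv.swap_apply_left] at h2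
        rw [hyb] at h1
        rw [Fin.lt_def] at h1 h2
        have : p x.1 ≠ p b'' := fun he => hxb'' (p.injective he)
        rw [Ne, Fin.ext_iff] at this
        omega
      · rcases eq_or_ne x.2 b'' with hyb'' | hyb''
        · rw [hyb'', Equiv.swap_apply_right] at h2
          rw [hyb''] at h1
          rw [Fin.lt_def] at h1 h2; omega
        · rw [Equiv.swap_apply_of_ne_of_ne hyb hyb''] at h2
          exact absurd h2 (lt_asymm h1)
  calc _ ≤ ({(b'', b)} : Finset (Fin n × Fin n)).card := Finset.card_le_card hsub
    _ = 1 := Finset.card_singleton _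

lemma exists_move {n : ℕ} : ∀ (k : ℕ) (p : Equiv.Perm (Fin n)) (b b' : Fin n), b ≠ b' →
    (p b : ℕ) - (p b' : ℕ) = k → ∃ q : Equiv.Perm (Fin n), q b < q b' ∧ kendall p q ≤ k
  | 0, p, b, b', hne, hk => by
    refine ⟨p, ?_, by rw [kendall_self]⟩
    have hle : (p b : ℕ) ≤ (p b' : ℕ) := by omega
    have hne' : (p b : ℕ) ≠ (p b' : ℕ) := fun he => hne (p.injective (Fin.val_injective he))
    exact Fin.lt_def.2 (lt_of_le_of_ne hle hne')
  | (k+1), p, b, b', hne, hk => by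
    have hpos : 0 < (p b : ℕ) := by omega
    have hlt : (p b : ℕ) - 1 < n := by have := (p b).isLt; omega
    set b'' : Fin n := p.symm ⟨(p b : ℕ) - 1, hlt⟩ with hb''
    have hpb'' : (p b'' : ℕ) = (p b : ℕ) - 1 := by simp [hb'']
    have hj : (p b'' : ℕ) + 1 = (p b : ℕ) := by omega
    have hq₁b : ((p * Equiv.swap b b'') b : ℕ) = (p b : ℕ) - 1 := by
      rw [Equiv.Perm.mul_apply, Equiv.swap_apply_left]; exact hpb''
    rcases eq_or_ne b'' b' with hbb' | hbb'
    · refine ⟨p * Equiv.swap b b'', ?_,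
        le_trans (kendall_swap_le_one p b b'' hj) (by omega)⟩
      have h1 : ((p * Equiv.swap b b'') b'' : ℕ) = (p b : ℕ) := by
        rw [Equiv.Perm.mul_apply, Equiv.swap_apply_right]
      rw [← hbb', Fin.lt_def]
      omega
    · have hq₁b' : (p * Equiv.swap b b'') b' = p b' := by
        rw [Equiv.Perm.mul_apply,
          Equiv.swap_apply_of_ne_of_ne (Ne.symm hne) (Ne.symm hbb')]
      have hk' : (((p * Equiv.swap b b'') b : ℕ)) - (((p * Equiv.swap b b'') b' : ℕ)) = k := by
        rw [hq₁b', hq₁b]; omega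
      obtain ⟨q, hq1, hq2⟩ := exists_move k (p * Equiv.swap b b'') b b' hne hk'
      refine ⟨q, hq1, le_trans (kendall_triangle p (p * Equiv.swap b b'') q) ?_⟩
      have := kendall_swap_le_one p b b'' hj
      omega

lemma dist_lower {n : ℕ} (P Q : SMProfile n) (M : Equiv.Perm (Fin n)) (u w : Fin n)
    (hb : Blocks Q M u w) :
    ((P.1 u w : ℕ) - (P.1 u (M u) : ℕ)) + ((P.2 w u : ℕ) - (P.2 w (M.symm w) : ℕ))
      ≤ profileDist P Q := by
  obtain ⟨h0, h1, h2⟩ := hb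
  have l1 := kendall_lower (P.1 u) (Q.1 u) w (M u) h1
  have l2 := kendall_lower (P.2 w) (Q.2 w) u (M.symm w) h2
  have s1 : kendall (P.1 u) (Q.1 u) ≤ ∑ v, kendall (P.1 v) (Q.1 v) :=
    Finset.single_le_sum (f := fun v => kendall (P.1 v) (Q.1 v))
      (fun i _ => Nat.zero_le _) (Finset.mem_univ u)
  have s2 : kendall (P.2 w) (Q.2 w) ≤ ∑ v, kendall (P.2 v) (Q.2 v) :=
    Finset.single_le_sum (f := fun v => kendall (P.2 v) (Q.2 v))
      (fun i _ => Nat.zero_le _) (Finset.mem_univ w)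
  unfold profileDist
  omega

/-- the minimum number of adjacent swaps needed to make the stable matching
`M` unstable equals the minimum, over pairs `{u,w} ∉ M`, of
`c_u(w, M(u)) + c_w(u, M(w))`, where the cost `c_a(b,b')` of bringing `b` in front of
`b'` in `a`'s list is the truncated difference of ranks. -/
theorem stmt3 {n : ℕ} (hn : 1 < n) (P : SMProfile n) (M : Equiv.Perm (Fin n))
    (hM : IsStable P M) :
    IsLeast {k | ∃ Q : SMProfile n, profileDist P Q = k ∧ ¬ IsStable Q M}
      (sInf {k | ∃ u w : Fin n, M u ≠ w ∧
        k = (((P.1 u w : ℕ) - (P.1 u (M u) : ℕ)) +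
             ((P.2 w u : ℕ) - (P.2 w (M.symm w) : ℕ)))}) := by
  set T : Set ℕ := {k | ∃ u w : Fin n, M u ≠ w ∧
        k = (((P.1 u w : ℕ) - (P.1 u (M u) : ℕ)) +
             ((P.2 w u : ℕ) - (P.2 w (M.symm w) : ℕ)))} with hT
  have h0 : (0 : ℕ) < n := by omega
  have hTne : T.Nonempty := by
    rcases eq_or_ne (M ⟨0, h0⟩) ⟨0, h0⟩ with he | he
    · refine ⟨_, ⟨⟨0, h0⟩, ⟨1, hn⟩, ?_, rfl⟩⟩
      rw [he]
      intro hc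
      rw [Fin.ext_iff] at hc
      simp at hc
    · exact ⟨_, ⟨⟨0, h0⟩, ⟨0, h0⟩, he, rfl⟩⟩
  -- lower bound part
  have hlb : ∀ k ∈ {k | ∃ Q : SMProfile n, profileDist P Q = k ∧ ¬ IsStable Q M},
      sInf T ≤ k := by
    rintro k ⟨Q, rfl, hQ⟩
    rw [IsStable] at hQ
    push_neg at hQ
    obtain ⟨u', w', hb⟩ := hQ
    refine le_trans (Nat.sInf_le ?_) (dist_lower P Q M u' w' hb)
    exact ⟨u', w', hb.1, rfl⟩
  -- membership part
  obtain ⟨u, w, hne, hk⟩ := Nat.sInf_mem hTne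
  have hwMu : w ≠ M u := Ne.symm hne
  have huMw : u ≠ M.symm w := by
    intro he
    exact hne (by rw [he, Equiv.apply_symm_apply])
  obtain ⟨q₁, hq₁lt, hq₁d⟩ :=
    exists_move ((P.1 u w : ℕ) - (P.1 u (M u) : ℕ)) (P.1 u) w (M u) hwMu rfl
  obtain ⟨q₂, hq₂lt, hq₂d⟩ :=
    exists_move ((P.2 w u : ℕ) - (P.2 w (M.symm w) : ℕ)) (P.2 w) u (M.symm w) huMw rfl
  set Q : SMProfile n := (Function.update P.1 u q₁, Function.update P.2 w q₂) with hQdef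
  have hQ1u : Q.1 u = q₁ := Function.update_self u q₁ P.1
  have hQ2w : Q.2 w = q₂ := Function.update_self w q₂ P.2
  have hQun : ¬ IsStable Q M := by
    intro hs
    exact hs u w ⟨hne, by rw [hQ1u]; exact hq₁lt, by rw [hQ2w]; exact hq₂lt⟩
  have e1 : ∑ v, kendall (P.1 v) (Q.1 v) = kendall (P.1 u) q₁ := by
    rw [Finset.sum_eq_single u]
    · rw [hQ1u]
    · intro v _ hv
      have : Q.1 v = P.1 v := Function.update_of_ne hv q₁ P.1
      rw [this, kendall_self]
    · intro h
      exact absurd (Finset.mem_univ u) h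
  have e2 : ∑ v, kendall (P.2 v) (Q.2 v) = kendall (P.2 w) q₂ := by
    rw [Finset.sum_eq_single w]
    · rw [hQ2w]
    · intro v _ hv
      have : Q.2 v = P.2 v := Function.update_of_ne hv q₂ P.2
      rw [this, kendall_self]
    · intro h
      exact absurd (Finset.mem_univ w) h
  have hdle : profileDist P Q ≤ sInf T := by
    unfold profileDist
    rw [e1, e2, hk]
    omega
  have hdge : sInf T ≤ profileDist P Q := hlb _ ⟨Q, rfl, hQun⟩
  exact ⟨⟨Q, le_antisymm hdle hdge, hQun⟩, hlb⟩
end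

section
/- Fix n ≥ 2 and consider permutations of n elements counted with a fixed designated position pair. Let T_d[n,k,1] denote the number of permutations of elements at positions 1 and d+1 and d−1 other interleaved elements (n = d+1 total) with exactly k inversions such that the element originally at position 1 still precedes the element originally at position d+1. Then T_d[d+1, k, 1] = Σ_{ℓ=0}^{n−2} T[d−1, k−ℓ] · (ℓ+1), where T[d−1, ·] counts unrestricted permutations of d−1 elements by inversion number. -/
open Finset

/-- Number of inversions of a permutation of `Fin n`. -/
def invCount {n : ℕ} (σ : Equiv.Perm (Fin n)) : ℕ :=
  ((Finset.univ ×ˢ Finset.univ : Finset (Fin n × Fin n)).filter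
    (fun p => p.1 < p.2 ∧ σ p.2 < σ p.1)).card

/-- `T n k`: the number of permutations of `n` elements with exactly `k` inversions. -/
def permsWithInv (n k : ℕ) : ℕ :=
  (Finset.univ.filter (fun σ : Equiv.Perm (Fin n) => invCount σ = k)).card

open scoped Classical

/-- `T'[n,k,i,j]`: the number of permutations of `n` elements (0-based positions) with
exactly `k` inversions in which the designated element at position `i` stays before the
designated element at position `j`, i.e. `π(i) < π(j)`. -/
noncomputable def permsWithInvPair (n k i j : ℕ) : ℕ :=
  (Finset.univ.filter (fun σ : Equiv.Perm (Fin n) => invCount σ = k ∧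
    ∀ (hi : i < n) (hj : j < n), σ ⟨i, hi⟩ < σ ⟨j, hj⟩)).card

namespace Stmt18Aux

lemma invCount_eq_sum {n : ℕ} (σ : Equiv.Perm (Fin n)) :
    invCount σ = ∑ p : Fin n, ∑ q : Fin n, if p < q ∧ σ q < σ p then 1 else 0 := by
  rw [invCount, Finset.card_filter, Finset.sum_product]

lemma val_succAbove {n : ℕ} (p : Fin (n + 1)) (i : Fin n) :
    (p.succAbove i).val = if i.val < p.val then i.val else i.val + 1 := by
  rcases lt_or_ge (i.val) (p.val) with h | h
  · rw [Fin.succAbove_of_castSucc_lt _ _ (by simpa [Fin.lt_def] using h)]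
    simp [h]
  · rw [Fin.succAbove_of_le_castSucc _ _ (by simpa [Fin.le_def] using h)]
    have h' : ¬ i.val < p.val := not_lt.mpr h
    simp [h']

variable {m : ℕ}

/-- Order embedding of `Fin m` into `Fin (m+2)` avoiding `b.succAbove a'` and `b`. -/
def emb (a' : Fin (m + 1)) (b : Fin (m + 2)) (v : Fin m) : Fin (m + 2) :=
  b.succAbove (a'.succAbove v)

lemma emb_lt_emb_iff {a' : Fin (m + 1)} {b : Fin (m + 2)} {v w : Fin m} :
    emb a' b v < emb a' b w ↔ v < w := by
  simp only [emb, Fin.lt_def, val_succAbove]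
  split_ifs <;> omega

lemma emb_lt_castSucc_iff {a' : Fin (m + 1)} {b : Fin (m + 2)}
    (hab : (a' : ℕ) < (b : ℕ)) (v : Fin m) :
    emb a' b v < Fin.castSucc a' ↔ (v : ℕ) < (a' : ℕ) := by
  simp only [emb, Fin.lt_def, Fin.coe_castSucc, val_succAbove]
  split_ifs <;> omega

lemma lt_emb_iff {a' : Fin (m + 1)} {b : Fin (m + 2)}
    (hab : (a' : ℕ) < (b : ℕ)) (v : Fin m) :
    b < emb a' b v ↔ (b : ℕ) - 1 ≤ (v : ℕ) := by
  simp only [emb, Fin.lt_def, val_succAbove]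
  split_ifs <;> omega

def bfun (b : Fin (m + 2)) (a' : Fin (m + 1)) (τ : Equiv.Perm (Fin m)) :
    Fin (m + 2) → Fin (m + 2) :=
  fun p => Fin.cases (b.succAbove a')
    (fun q => Fin.lastCases b (fun i => emb a' b (τ i)) q) p

@[simp] lemma bfun_zero (b : Fin (m + 2)) (a' : Fin (m + 1)) (τ : Equiv.Perm (Fin m)) :
    bfun b a' τ 0 = b.succAbove a' := by simp [bfun]

@[simp] lemma bfun_pos (b : Fin (m + 2)) (a' : Fin (m + 1)) (τ : Equiv.Perm (Fin m))
    (i : Fin m) : bfun b a' τ (Fin.castSucc i).succ = emb a' b (τ i) := by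
  simp [bfun]

@[simp] lemma bfun_last (b : Fin (m + 2)) (a' : Fin (m + 1)) (τ : Equiv.Perm (Fin m)) :
    bfun b a' τ (Fin.last (m + 1)) = b := by
  have hl : (Fin.last (m + 1)) = (Fin.last m).succ := (Fin.succ_last m).symm
  simp only [hl, bfun, Fin.cases_succ, Fin.lastCases_last]

lemma bfun_injective (b : Fin (m + 2)) (a' : Fin (m + 1)) (τ : Equiv.Perm (Fin m)) :
    Function.Injective (bfun b a' τ) := by
  intro p q hpq
  induction p using Fin.cases with
  | zero =>
    induction q using Fin.cases with
    | zero => rfl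
    | succ q =>
      induction q using Fin.lastCases with
      | last =>
        rw [Fin.succ_last] at hpq
        rw [bfun_zero, bfun_last] at hpq
        exact absurd hpq (Fin.succAbove_ne b a')
      | cast i =>
        rw [bfun_zero, bfun_pos] at hpq
        have := Fin.succAbove_right_injective (p := b) hpq
        exact absurd this.symm (Fin.succAbove_ne a' (τ i))
  | succ p =>
    induction q using Fin.cases with
    | zero =>
      induction p using Fin.lastCases with
      | last =>
        rw [Fin.succ_last] at hpq
        rw [bfun_zero, bfun_last] at hpq
        exact absurd hpq.symm (Fin.succAbove_ne b a')
      | cast i =>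
        rw [bfun_zero, bfun_pos] at hpq
        have := Fin.succAbove_right_injective (p := b) hpq
        exact absurd this (Fin.succAbove_ne a' (τ i))
    | succ q =>
      induction p using Fin.lastCases with
      | last =>
        induction q using Fin.lastCases with
        | last => rfl
        | cast j =>
          rw [Fin.succ_last, bfun_last, bfun_pos] at hpq
          exact absurd hpq.symm (Fin.succAbove_ne b _)
      | cast i =>
        induction q using Fin.lastCases with
        | last =>
          rw [Fin.succ_last, bfun_pos, bfun_last] at hpq
          exact absurd hpq (Fin.succAbove_ne b _)
        | cast j =>
          rw [bfun_pos, bfun_pos] at hpq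
          have h1 := Fin.succAbove_right_injective (p := b) hpq
          have h2 := Fin.succAbove_right_injective (p := a') h1
          have h3 := τ.injective h2
          rw [h3]

noncomputable def bperm (b : Fin (m + 2)) (a' : Fin (m + 1)) (τ : Equiv.Perm (Fin m)) :
    Equiv.Perm (Fin (m + 2)) :=
  Equiv.ofBijective (bfun b a' τ) (Finite.injective_iff_bijective.mp (bfun_injective b a' τ))

@[simp] lemma bperm_apply (b : Fin (m + 2)) (a' : Fin (m + 1)) (τ : Equiv.Perm (Fin m))
    (p : Fin (m + 2)) : bperm b a' τ p = bfun b a' τ p := rfl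

lemma sum_split (f : Fin (m + 2) → ℕ) :
    ∑ p : Fin (m + 2), f p
      = f 0 + ((∑ i : Fin m, f (Fin.castSucc i).succ) + f (Fin.last (m + 1))) := by
  rw [Fin.sum_univ_succ, Fin.sum_univ_castSucc, Fin.succ_last]

lemma sum_ite_lt_fin (c : ℕ) :
    (∑ v : Fin m, if (v : ℕ) < c then 1 else 0) = min c m := by
  rw [Fin.sum_univ_eq_sum_range (fun x => if x < c then 1 else 0) m]
  induction m with
  | zero => simp
  | succ n ih => rw [Finset.sum_range_succ, ih]; split_ifs <;> omega

lemma sum_ite_le_fin (c : ℕ) :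
    (∑ v : Fin m, if c ≤ (v : ℕ) then 1 else 0) = m - c := by
  rw [Fin.sum_univ_eq_sum_range (fun x => if c ≤ x then 1 else 0) m]
  induction m with
  | zero => simp
  | succ n ih => rw [Finset.sum_range_succ, ih]; split_ifs <;> omega

lemma invCount_bperm (b : Fin (m + 2)) (a' : Fin (m + 1)) (τ : Equiv.Perm (Fin m))
    (h : Fin.castSucc a' < b) :
    invCount (bperm b a' τ) = invCount τ + ((a' : ℕ) + (m + 1 - (b : ℕ))) := by
  have hab : (a' : ℕ) < (b : ℕ) := h
  have hA : bperm b a' τ 0 = Fin.castSucc a' := by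
    rw [bperm_apply, bfun_zero, Fin.succAbove_of_castSucc_lt _ _ h]
  rw [invCount_eq_sum]
  simp only [sum_split]
  rw [hA]
  simp only [bperm_apply, bfun_pos, bfun_last]
  have c1 : (if (0 : Fin (m+2)) < 0 ∧ Fin.castSucc a' < Fin.castSucc a' then 1 else 0) = 0 := by
    simp
  have c2 : ∀ j : Fin m,
      (if (0 : Fin (m+2)) < (Fin.castSucc j).succ ∧ emb a' b (τ j) < Fin.castSucc a'
        then 1 else 0)
      = if ((τ j : ℕ)) < (a' : ℕ) then 1 else 0 := by
    intro j
    refine if_congr ?_ rfl rfl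
    constructor
    · rintro ⟨_, h2⟩; exact (emb_lt_castSucc_iff hab _).mp h2
    · intro hj; exact ⟨Fin.succ_pos _, (emb_lt_castSucc_iff hab _).mpr hj⟩
  have c3 : (if (0 : Fin (m+2)) < Fin.last (m+1) ∧ b < Fin.castSucc a' then 1 else 0) = 0 := by
    have : ¬ b < Fin.castSucc a' := not_lt.mpr h.le
    simp [this]
  have c4 : ∀ i : Fin m,
      (if (Fin.castSucc i).succ < 0 ∧ Fin.castSucc a' < emb a' b (τ i) then 1 else 0) = 0 := by
    intro i
    simp [Fin.not_lt_zero]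
  have c5 : ∀ i j : Fin m,
      (if (Fin.castSucc i).succ < (Fin.castSucc j).succ ∧ emb a' b (τ j) < emb a' b (τ i)
        then 1 else 0)
      = if i < j ∧ τ j < τ i then 1 else 0 := by
    intro i j
    refine if_congr ?_ rfl rfl
    rw [Fin.succ_lt_succ_iff, Fin.castSucc_lt_castSucc_iff, emb_lt_emb_iff]
  have c6 : ∀ i : Fin m,
      (if (Fin.castSucc i).succ < Fin.last (m+1) ∧ b < emb a' b (τ i) then 1 else 0)
      = if (b : ℕ) - 1 ≤ ((τ i : ℕ)) then 1 else 0 := by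
    intro i
    refine if_congr ?_ rfl rfl
    constructor
    · rintro ⟨_, h2⟩; exact (lt_emb_iff hab _).mp h2
    · intro hi
      refine ⟨?_, (lt_emb_iff hab _).mpr hi⟩
      rw [← Fin.succ_last]
      exact Fin.succ_lt_succ_iff.mpr (Fin.castSucc_lt_last i)
  have c7 : ∀ q : Fin (m + 2), ∀ x : Fin (m + 2),
      (if Fin.last (m+1) < q ∧ x < b then 1 else 0) = 0 := by
    intro q x
    have : ¬ Fin.last (m+1) < q := not_lt.mpr (Fin.le_last q)
    simp [this]
  simp only [c1, c2, c3, c4, c5, c6, c7]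
  have e2 : (∑ j : Fin m, if ((τ j : ℕ)) < (a' : ℕ) then 1 else 0) = (a' : ℕ) := by
    rw [Equiv.sum_comp τ (fun v : Fin m => if (v : ℕ) < (a' : ℕ) then 1 else 0)]
    rw [sum_ite_lt_fin]
    have := a'.isLt
    omega
  have e6 : (∑ i : Fin m, if (b : ℕ) - 1 ≤ ((τ i : ℕ)) then 1 else 0) = m + 1 - (b : ℕ) := by
    rw [Equiv.sum_comp τ (fun v : Fin m => if (b : ℕ) - 1 ≤ (v : ℕ) then 1 else 0)]
    rw [sum_ite_le_fin]
    have := b.isLt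
    omega
  simp only [Finset.sum_const_zero, Finset.sum_add_distrib, add_zero, zero_add]
  rw [e2, e6, ← invCount_eq_sum τ]
  omega

noncomputable def tripleMap (m : ℕ) :
    Fin (m + 2) × Fin (m + 1) × Equiv.Perm (Fin m) → Equiv.Perm (Fin (m + 2)) :=
  fun x => bperm x.1 x.2.1 x.2.2

lemma tripleMap_injective (m : ℕ) : Function.Injective (tripleMap m) := by
  rintro ⟨b, a', τ⟩ ⟨c, c', ρ⟩ h
  have hfun : ∀ p, bfun b a' τ p = bfun c c' ρ p := by
    intro p
    have := DFunLike.congr_fun h p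
    simpa [tripleMap] using this
  have hb : b = c := by
    have := hfun (Fin.last (m + 1))
    rwa [bfun_last, bfun_last] at this
  subst hb
  have ha : a' = c' := by
    have := hfun 0
    rw [bfun_zero, bfun_zero] at this
    exact Fin.succAbove_right_injective this
  subst ha
  have hτ : τ = ρ := by
    apply Equiv.ext
    intro i
    have := hfun (Fin.castSucc i).succ
    rw [bfun_pos, bfun_pos] at this
    exact Fin.succAbove_right_injective (p := a')
      (Fin.succAbove_right_injective (p := b) this)
  subst hτ
  rfl

lemma tripleMap_bijective (m : ℕ) : Function.Bijective (tripleMap m) := by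
  rw [Fintype.bijective_iff_injective_and_card]
  refine ⟨tripleMap_injective m, ?_⟩
  simp [Fintype.card_prod, Fintype.card_perm, Fintype.card_fin, Nat.factorial_succ]

lemma reindex (g : ℕ → ℕ) (m : ℕ) :
    (∑ b ∈ Finset.range (m + 2), ∑ a ∈ Finset.range (m + 1),
        if a < b then g (a + (m + 1 - b)) else 0)
      = ∑ ℓ ∈ Finset.range (m + 1), g ℓ * (ℓ + 1) := by
  have h1 : ∀ b ∈ Finset.range (m + 2),
      (∑ a ∈ Finset.range (m + 1), if a < b then g (a + (m + 1 - b)) else 0)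
        = ∑ a ∈ Finset.range b, g (a + (m + 1 - b)) := by
    intro b hb
    rw [Finset.mem_range] at hb
    rw [← Finset.sum_filter]
    congr 1
    ext x
    simp only [Finset.mem_filter, Finset.mem_range]
    omega
  rw [Finset.sum_congr rfl h1, Finset.sum_sigma' (Finset.range (m + 2)) (fun b => Finset.range b)
    (fun b a => g (a + (m + 1 - b)))]
  have h2 : (∑ ℓ ∈ Finset.range (m + 1), g ℓ * (ℓ + 1))
      = ∑ x ∈ (Finset.range (m + 1)).sigma (fun ℓ => Finset.range (ℓ + 1)), g x.1 := by
    rw [← Finset.sum_sigma' (Finset.range (m + 1)) (fun ℓ => Finset.range (ℓ + 1))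
      (fun ℓ _ => g ℓ)]
    refine Finset.sum_congr rfl (fun ℓ _ => ?_)
    rw [Finset.sum_const, Finset.card_range, smul_eq_mul, mul_comm]
  rw [h2]
  refine Finset.sum_nbij' (fun x => ⟨x.2 + (m + 1 - x.1), x.2⟩)
    (fun y => ⟨y.2 + (m + 1) - y.1, y.2⟩) ?_ ?_ ?_ ?_ ?_
  · rintro ⟨b, a⟩ hx
    simp only [Finset.mem_sigma, Finset.mem_range] at hx ⊢
    omega
  · rintro ⟨ℓ, a⟩ hy
    simp only [Finset.mem_sigma, Finset.mem_range] at hy ⊢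
    omega
  · rintro ⟨b, a⟩ hx
    simp only [Finset.mem_sigma, Finset.mem_range] at hx
    refine Sigma.ext ?_ (heq_of_eq rfl)
    simp only
    omega
  · rintro ⟨ℓ, a⟩ hy
    simp only [Finset.mem_sigma, Finset.mem_range] at hy
    refine Sigma.ext ?_ (heq_of_eq rfl)
    simp only
    omega
  · rintro ⟨b, a⟩ hx
    rfl

end Stmt18Aux

open Stmt18Aux

/-- with `n = d + 1` elements and the two designated elements at the two
ends (0-based positions `0` and `d`, required to stay in relative order),
`T_d[d+1, k, 1] = Σ_{ℓ=0}^{n−2} T[d−1, k−ℓ] · (ℓ+1)` (terms with `k − ℓ < 0` omitted). -/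
theorem stmt18 (d k : ℕ) (hd : 1 ≤ d) :
    permsWithInvPair (d + 1) k 0 d =
      ∑ ℓ ∈ Finset.range d,
        if ℓ ≤ k then permsWithInv (d - 1) (k - ℓ) * (ℓ + 1) else 0 := by
  obtain ⟨m, rfl⟩ : ∃ m, d = m + 1 := ⟨d - 1, by omega⟩
  simp only [Nat.add_sub_cancel]
  -- Step 1: identify the LHS with a concrete filter
  have hS : permsWithInvPair (m + 1 + 1) k 0 (m + 1) =
      (Finset.univ.filter (fun σ : Equiv.Perm (Fin (m + 2)) =>
        invCount σ = k ∧ σ 0 < σ (Fin.last (m + 1)))).card := by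
    unfold permsWithInvPair
    congr 1
    ext σ
    simp only [Finset.mem_filter, Finset.mem_univ, true_and]
    constructor
    · rintro ⟨h1, h2⟩
      exact ⟨h1, h2 (by omega) (by omega)⟩
    · rintro ⟨h1, h2⟩
      exact ⟨h1, fun hi hj => h2⟩
  rw [hS]
  -- Step 2: transfer to triples via the bijection
  have hT : (Finset.univ.filter (fun σ : Equiv.Perm (Fin (m + 2)) =>
        invCount σ = k ∧ σ 0 < σ (Fin.last (m + 1)))).card =
      (Finset.univ.filter (fun x : Fin (m + 2) × Fin (m + 1) × Equiv.Perm (Fin m) =>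
        Fin.castSucc x.2.1 < x.1 ∧
          invCount x.2.2 + ((x.2.1 : ℕ) + (m + 1 - (x.1 : ℕ))) = k)).card := by
    rw [eq_comm]
    refine Finset.card_bij (fun x _ => tripleMap m x) ?_ ?_ ?_
    · rintro ⟨b, a', τ⟩ hx
      simp only [Finset.mem_filter, Finset.mem_univ, true_and] at hx ⊢
      obtain ⟨hab, hk⟩ := hx
      refine ⟨?_, ?_⟩
      · rw [tripleMap, invCount_bperm b a' τ hab]; exact hk
      · show bperm b a' τ 0 < bperm b a' τ (Fin.last (m + 1))
        rw [bperm_apply, bperm_apply, bfun_zero, bfun_last,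
          Fin.succAbove_of_castSucc_lt _ _ hab]
        exact hab
    · intro x hx y hy hxy
      exact tripleMap_injective m hxy
    · intro σ hσ
      simp only [Finset.mem_filter, Finset.mem_univ, true_and] at hσ
      obtain ⟨hk, hlt⟩ := hσ
      obtain ⟨⟨b, a', τ⟩, rfl⟩ := (tripleMap_bijective m).2 σ
      have h0 : tripleMap m (b, a', τ) 0 = b.succAbove a' := by
        rw [tripleMap, bperm_apply, bfun_zero]
      have hl : tripleMap m (b, a', τ) (Fin.last (m + 1)) = b := by
        rw [tripleMap, bperm_apply, bfun_last]
      rw [h0, hl] at hlt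
      have hab : Fin.castSucc a' < b := by
        by_contra hcon
        push_neg at hcon
        rw [Fin.succAbove_of_le_castSucc _ _ hcon] at hlt
        have h1 : (b : ℕ) ≤ (a' : ℕ) := by simpa [Fin.le_def] using hcon
        have h2 : (a' : ℕ) + 1 < (b : ℕ) := by
          simpa [Fin.lt_def, Fin.val_succ] using hlt
        omega
      refine ⟨(b, a', τ), ?_, rfl⟩
      simp only [Finset.mem_filter, Finset.mem_univ, true_and]
      refine ⟨hab, ?_⟩
      rw [tripleMap, invCount_bperm b a' τ hab] at hk
      omega
  rw [hT]
  -- Step 3: compute the cardinality of the triple set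
  rw [Finset.card_filter, Fintype.sum_prod_type]
  simp only [Fintype.sum_prod_type]
  have hinner : ∀ (b : Fin (m + 2)) (a' : Fin (m + 1)),
      (∑ τ : Equiv.Perm (Fin m),
        if Fin.castSucc a' < b ∧ invCount τ + ((a' : ℕ) + (m + 1 - (b : ℕ))) = k
          then 1 else 0)
      = if (a' : ℕ) < (b : ℕ) then
          (if (a' : ℕ) + (m + 1 - (b : ℕ)) ≤ k then
            permsWithInv m (k - ((a' : ℕ) + (m + 1 - (b : ℕ)))) else 0)
        else 0 := by
    intro b a'
    by_cases hb : Fin.castSucc a' < b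
    · have hb' : (a' : ℕ) < (b : ℕ) := hb
      simp only [hb, true_and, hb', if_true]
      by_cases hk2 : (a' : ℕ) + (m + 1 - (b : ℕ)) ≤ k
      · rw [if_pos hk2, permsWithInv, Finset.card_filter]
        refine Finset.sum_congr rfl (fun τ _ => ?_)
        refine if_congr ?_ rfl rfl
        omega
      · rw [if_neg hk2]
        refine Finset.sum_eq_zero (fun τ _ => ?_)
        rw [if_neg]
        omega
    · have hb' : ¬ (a' : ℕ) < (b : ℕ) := fun h => hb (Fin.lt_def.mpr h)
      simp [hb, hb']
  rw [Finset.sum_congr rfl (fun b _ => Finset.sum_congr rfl (fun a' _ => hinner b a'))]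
  rw [Fin.sum_univ_eq_sum_range (fun bv => ∑ a' : Fin (m + 1),
    if (a' : ℕ) < bv then
      (if (a' : ℕ) + (m + 1 - bv) ≤ k then permsWithInv m (k - ((a' : ℕ) + (m + 1 - bv)))
        else 0) else 0) (m + 2)]
  rw [Finset.sum_congr rfl (fun b _ => Fin.sum_univ_eq_sum_range (fun av =>
    if av < b then
      (if av + (m + 1 - b) ≤ k then permsWithInv m (k - (av + (m + 1 - b))) else 0)
      else 0) (m + 1))]
  rw [reindex (fun ℓ => if ℓ ≤ k then permsWithInv m (k - ℓ) else 0) m]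
  refine Finset.sum_congr rfl (fun ℓ _ => ?_)
  split_ifs <;> simp
end
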